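/- Let A₁, B₁, A₂, B₂ be nonempty finite types, let K₁ and K₂ be Hermitian cost matrices indexed by (A₁×B₁)×(A₁×B₁) and (A₂×B₂)×(A₂×B₂), and let ρ_i, σ_i be states on A_i, B_i for i = 1, 2. Define K₁₂ on the composite system (A₁×A₂)×(B₁×B₂), identified with (A₁×B₁)×(A₂×B₂) via the obvious index bijection, by K₁₂ = K₁ ⊗ₖ 1 + 1 ⊗ₖ K₂. Then 𝒦_{K₁₂}(ρ₁ ⊗ₖ ρ₂, σ₁ ⊗ₖ σ₂) ≤ 𝒦_{K₁}(ρ₁, σ₁) + 𝒦_{K₂}(ρ₂, σ₂). -/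

import Mathlib

open Matrix
open scoped Kronecker ComplexOrder

noncomputable def jordan {n : Type*} [Fintype n] (X Y : Matrix n n ℂ) : Matrix n n ℂ :=
  (2 : ℂ)⁻¹ • (X * Y + Y * X)

noncomputable def trB {A B : Type*} [Fintype B] (M : Matrix (A × B) (A × B) ℂ) : Matrix A A ℂ :=
  Matrix.of fun i j => ∑ k, M (i, k) (j, k)

noncomputable def trA {A B : Type*} [Fintype A] (M : Matrix (A × B) (A × B) ℂ) : Matrix B B ℂ :=
  Matrix.of fun k l => ∑ i, M (i, k) (i, l)

def ptA {A B : Type*} (M : Matrix (A × B) (A × B) ℂ) : Matrix (A × B) (A × B) ℂ :=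
  Matrix.of fun p q => M (q.1, p.2) (p.1, q.2)

def swap (A : Type*) [DecidableEq A] : Matrix (A × A) (A × A) ℂ :=
  Matrix.of fun p q => if p.1 = q.2 ∧ p.2 = q.1 then 1 else 0

def IsState {A : Type*} [Fintype A] (ρ : Matrix A A ℂ) : Prop :=
  ρ.PosSemidef ∧ ρ.trace = 1

def IsJam {A B : Type*} [Fintype A] [Fintype B] [DecidableEq A]
    (J : Matrix (A × B) (A × B) ℂ) : Prop :=
  (ptA J).PosSemidef ∧ trB J = 1

noncomputable def cost {A B : Type*} [Fintype A] [Fintype B] [DecidableEq A] [DecidableEq B]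
    (K : Matrix (A × B) (A × B) ℂ) (ρ : Matrix A A ℂ) (σ : Matrix B B ℂ) : ℝ :=
  sInf { r : ℝ | ∃ J : Matrix (A × B) (A × B) ℂ, IsJam J ∧
      trA ((ρ ⊗ₖ (1 : Matrix B B ℂ)) * J) = σ ∧
      r = (Matrix.trace (K * jordan (ρ ⊗ₖ (1 : Matrix B B ℂ)) J)).re }

/-!
If `J₁`, `J₂` are feasible for the two transport problems, their Kronecker product, regrouped
so that it is indexed by `(A₁ × A₂) × (B₁ × B₂)`, is feasible for the composite problem: the
partial transpose, both partial traces and matrix products all factor over it. Since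
`Tr ((ρᵢ ⊗ 1) Jᵢ) = Tr σᵢ = 1`, the cost of `K₁ ⊗ 1 + 1 ⊗ K₂` on it is the sum of the two
costs, and taking infima gives the inequality.

Because `sInf` is `0` on empty or unbounded-below sets, the infima must be shown to be honest:
`1 ⊗ σ` is always feasible, and the costs are bounded below because every entry of a
Jamiołkowski matrix is bounded by `|A|` (its partial transpose is positive semidefinite with
trace `|A|`).
-/

namespace Matrix.PosSemidef

variable {n 𝕜 : Type*} [RCLike 𝕜] {N : Matrix n n 𝕜}

lemma norm_apply_sq_le (hN : N.PosSemidef) (a b : n) :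
    ‖N a b‖ ^ 2 ≤ RCLike.re (N a a) * RCLike.re (N b b) := by
  classical
  have hdet := (hN.submatrix ![a, b]).det_nonneg
  have hba : N b a = star (N a b) := (hN.isHermitian.apply b a).symm
  simp only [det_fin_two, submatrix_apply, cons_val_zero, cons_val_one, hba, RCLike.star_def,
    RCLike.mul_conj] at hdet
  rw [← hN.isHermitian.coe_re_apply_self a, ← hN.isHermitian.coe_re_apply_self b] at hdet
  exact_mod_cast sub_nonneg.mp hdet

lemma norm_apply_le_re_trace [Fintype n] (hN : N.PosSemidef) (a b : n) :
    ‖N a b‖ ≤ RCLike.re N.trace := by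
  have hdiag (i : n) : 0 ≤ RCLike.re (N i i) := RCLike.nonneg_iff.mp hN.diag_nonneg |>.1
  have hle (i : n) : RCLike.re (N i i) ≤ RCLike.re N.trace := by
    rw [trace, map_sum]
    exact Finset.single_le_sum (fun j _ => hdiag j) (Finset.mem_univ i)
  have htr : 0 ≤ RCLike.re N.trace := (hdiag a).trans (hle a)
  refine (pow_le_pow_iff_left₀ (norm_nonneg _) htr two_ne_zero).mp ?_
  calc ‖N a b‖ ^ 2 ≤ RCLike.re (N a a) * RCLike.re (N b b) := hN.norm_apply_sq_le a b
    _ ≤ RCLike.re N.trace ^ 2 := sq (RCLike.re N.trace) ▸ mul_le_mul (hle a) (hle b) (hdiag b) htr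

end Matrix.PosSemidef

section PartialTrace

variable {A B : Type*} [Fintype A] [Fintype B]

lemma trace_trA (M : Matrix (A × B) (A × B) ℂ) : (trA M).trace = M.trace := by
  simp only [trace, diag, trA, of_apply, Fintype.sum_prod_type]
  exact Finset.sum_comm

lemma trace_trB (M : Matrix (A × B) (A × B) ℂ) : (trB M).trace = M.trace := by
  simp only [trace, diag, trB, of_apply, Fintype.sum_prod_type]

lemma trace_ptA (M : Matrix (A × B) (A × B) ℂ) : (ptA M).trace = M.trace := rfl

lemma IsJam.norm_apply_le [DecidableEq A] {J : Matrix (A × B) (A × B) ℂ} (hJ : IsJam J)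
    (p q : A × B) : ‖J p q‖ ≤ Fintype.card A := by
  have htr : (ptA J).trace = Fintype.card A := by
    rw [trace_ptA, ← trace_trB, hJ.2, trace_one]
  show ‖ptA J (q.1, p.2) (p.1, q.2)‖ ≤ _
  simpa [htr] using hJ.1.norm_apply_le_re_trace (q.1, p.2) (p.1, q.2)

end PartialTrace

lemma Matrix.trace_mul_jordan {n : Type*} [Fintype n] (K X J : Matrix n n ℂ) :
    (K * jordan X J).trace = (jordan K X * J).trace := by
  simp only [jordan, Matrix.mul_smul, Matrix.smul_mul, trace_smul, Matrix.mul_add, Matrix.add_mul,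
    trace_add, Matrix.mul_assoc]
  rw [← Matrix.mul_assoc K J X, trace_mul_comm X]

lemma Matrix.norm_trace_mul_le {n R : Type*} [Fintype n] [SeminormedRing R]
    (L J : Matrix n n R) {C : ℝ} (hJ : ∀ p q, ‖J p q‖ ≤ C) :
    ‖(L * J).trace‖ ≤ (∑ p, ∑ q, ‖L p q‖) * C := by
  simp only [trace, diag, mul_apply, Finset.sum_mul]
  refine (norm_sum_le _ _).trans (Finset.sum_le_sum fun p _ => ?_)
  refine (norm_sum_le _ _).trans (Finset.sum_le_sum fun q _ => ?_)
  exact (norm_mul_le _ _).trans (mul_le_mul_of_nonneg_left (hJ q p) (norm_nonneg _))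

section Coupling

variable {A B : Type*} [Fintype A] [Fintype B] [DecidableEq A] [DecidableEq B]

def IsCoupling (ρ : Matrix A A ℂ) (σ : Matrix B B ℂ) (J : Matrix (A × B) (A × B) ℂ) : Prop :=
  IsJam J ∧ trA ((ρ ⊗ₖ (1 : Matrix B B ℂ)) * J) = σ

noncomputable def transportCost (K : Matrix (A × B) (A × B) ℂ) (ρ : Matrix A A ℂ)
    (J : Matrix (A × B) (A × B) ℂ) : ℝ :=
  (trace (K * jordan (ρ ⊗ₖ (1 : Matrix B B ℂ)) J)).re

lemma cost_eq_sInf (K : Matrix (A × B) (A × B) ℂ) (ρ : Matrix A A ℂ) (σ : Matrix B B ℂ) :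
    cost K ρ σ = sInf (transportCost K ρ '' {J | IsCoupling ρ σ J}) := by
  simp only [cost, IsCoupling, transportCost, Set.image, Set.mem_ofPred_eq, and_assoc, eq_comm]

lemma IsCoupling.trace_mul {ρ : Matrix A A ℂ} {σ : Matrix B B ℂ} (hσ : IsState σ)
    {J : Matrix (A × B) (A × B) ℂ} (hJ : IsCoupling ρ σ J) :
    ((ρ ⊗ₖ (1 : Matrix B B ℂ)) * J).trace = 1 := by
  rw [← trace_trA, hJ.2, hσ.2]

lemma isCoupling_one_kronecker {ρ : Matrix A A ℂ} (hρ : IsState ρ) {σ : Matrix B B ℂ}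
    (hσ : IsState σ) : IsCoupling ρ σ ((1 : Matrix A A ℂ) ⊗ₖ σ) := by
  refine ⟨⟨?_, ?_⟩, ?_⟩
  · have : ptA ((1 : Matrix A A ℂ) ⊗ₖ σ) = (1 : Matrix A A ℂ) ⊗ₖ σ := by
      ext ⟨i, k⟩ ⟨j, l⟩
      simp [ptA, one_apply, eq_comm]
    rw [this]
    exact PosSemidef.one.kronecker hσ.1
  · have hσtr : ∑ k, σ k k = 1 := hσ.2
    ext i j
    show ∑ k, (1 : Matrix A A ℂ) i j * σ k k = _
    rw [← Finset.mul_sum, hσtr, mul_one]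
  · have hρtr : ∑ i, ρ i i = 1 := hρ.2
    ext k l
    simp [trA, ← mul_kronecker_mul, ← Finset.sum_mul, hρtr]

lemma bddBelow_transportCost (K : Matrix (A × B) (A × B) ℂ) (ρ : Matrix A A ℂ)
    (σ : Matrix B B ℂ) : BddBelow (transportCost K ρ '' {J | IsCoupling ρ σ J}) := by
  set L := jordan K (ρ ⊗ₖ (1 : Matrix B B ℂ))
  refine ⟨-((∑ p, ∑ q, ‖L p q‖) * Fintype.card A), ?_⟩
  rintro _ ⟨J, hJ, rfl⟩
  have := norm_trace_mul_le L J hJ.1.norm_apply_le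
  rw [transportCost, trace_mul_jordan]
  exact neg_le_of_abs_le ((Complex.abs_re_le_norm _).trans this)

lemma cost_le_transportCost {ρ : Matrix A A ℂ} {σ : Matrix B B ℂ}
    (K : Matrix (A × B) (A × B) ℂ) {J : Matrix (A × B) (A × B) ℂ} (hJ : IsCoupling ρ σ J) :
    cost K ρ σ ≤ transportCost K ρ J := by
  rw [cost_eq_sInf]
  exact csInf_le (bddBelow_transportCost K ρ σ) ⟨J, hJ, rfl⟩

lemma le_cost {ρ : Matrix A A ℂ} (hρ : IsState ρ) {σ : Matrix B B ℂ} (hσ : IsState σ)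
    (K : Matrix (A × B) (A × B) ℂ) {r : ℝ}
    (h : ∀ J, IsCoupling ρ σ J → r ≤ transportCost K ρ J) : r ≤ cost K ρ σ := by
  rw [cost_eq_sInf]
  refine le_csInf ⟨_, _, isCoupling_one_kronecker hρ hσ, rfl⟩ ?_
  rintro _ ⟨J, hJ, rfl⟩
  exact h J hJ

end Coupling

section Product

variable {A₁ B₁ A₂ B₂ : Type*}

def bipartiteKronecker (M₁ : Matrix (A₁ × B₁) (A₁ × B₁) ℂ) (M₂ : Matrix (A₂ × B₂) (A₂ × B₂) ℂ) :
    Matrix ((A₁ × A₂) × B₁ × B₂) ((A₁ × A₂) × B₁ × B₂) ℂ :=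
  (M₁ ⊗ₖ M₂).submatrix (Equiv.prodProdProdComm A₁ A₂ B₁ B₂) (Equiv.prodProdProdComm A₁ A₂ B₁ B₂)

lemma ptA_bipartiteKronecker (M₁ : Matrix (A₁ × B₁) (A₁ × B₁) ℂ)
    (M₂ : Matrix (A₂ × B₂) (A₂ × B₂) ℂ) :
    ptA (bipartiteKronecker M₁ M₂) = bipartiteKronecker (ptA M₁) (ptA M₂) :=
  rfl

lemma kronecker_kronecker_one_eq_bipartiteKronecker [DecidableEq B₁] [DecidableEq B₂]
    (ρ₁ : Matrix A₁ A₁ ℂ) (ρ₂ : Matrix A₂ A₂ ℂ) :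
    (ρ₁ ⊗ₖ ρ₂) ⊗ₖ (1 : Matrix (B₁ × B₂) (B₁ × B₂) ℂ) =
      bipartiteKronecker (ρ₁ ⊗ₖ (1 : Matrix B₁ B₁ ℂ)) (ρ₂ ⊗ₖ (1 : Matrix B₂ B₂ ℂ)) := by
  rw [← one_kronecker_one]
  ext ⟨⟨a₁, a₂⟩, b₁, b₂⟩ ⟨⟨c₁, c₂⟩, d₁, d₂⟩
  show ρ₁ a₁ c₁ * ρ₂ a₂ c₂ * ((1 : Matrix B₁ B₁ ℂ) b₁ d₁ * (1 : Matrix B₂ B₂ ℂ) b₂ d₂) =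
    ρ₁ a₁ c₁ * (1 : Matrix B₁ B₁ ℂ) b₁ d₁ * (ρ₂ a₂ c₂ * (1 : Matrix B₂ B₂ ℂ) b₂ d₂)
  ring

lemma trB_bipartiteKronecker [Fintype B₁] [Fintype B₂] (M₁ : Matrix (A₁ × B₁) (A₁ × B₁) ℂ)
    (M₂ : Matrix (A₂ × B₂) (A₂ × B₂) ℂ) :
    trB (bipartiteKronecker M₁ M₂) = trB M₁ ⊗ₖ trB M₂ := by
  ext ⟨i₁, i₂⟩ ⟨j₁, j₂⟩
  simp only [trB, bipartiteKronecker, of_apply, submatrix_apply, kroneckerMap_apply,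
    Fintype.sum_prod_type, Finset.sum_mul_sum]
  rfl

variable [Fintype A₁] [Fintype A₂]

lemma trA_bipartiteKronecker (M₁ : Matrix (A₁ × B₁) (A₁ × B₁) ℂ)
    (M₂ : Matrix (A₂ × B₂) (A₂ × B₂) ℂ) :
    trA (bipartiteKronecker M₁ M₂) = trA M₁ ⊗ₖ trA M₂ := by
  ext ⟨k₁, k₂⟩ ⟨l₁, l₂⟩
  simp only [trA, bipartiteKronecker, of_apply, submatrix_apply, kroneckerMap_apply,
    Fintype.sum_prod_type, Finset.sum_mul_sum]
  rfl

variable [Fintype B₁] [Fintype B₂]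

lemma trace_bipartiteKronecker (M₁ : Matrix (A₁ × B₁) (A₁ × B₁) ℂ)
    (M₂ : Matrix (A₂ × B₂) (A₂ × B₂) ℂ) :
    (bipartiteKronecker M₁ M₂).trace = M₁.trace * M₂.trace := by
  rw [← trace_kronecker]
  exact Fintype.sum_equiv (Equiv.prodProdProdComm A₁ A₂ B₁ B₂) _ _ fun _ => rfl

lemma bipartiteKronecker_mul_bipartiteKronecker (M₁ N₁ : Matrix (A₁ × B₁) (A₁ × B₁) ℂ)
    (M₂ N₂ : Matrix (A₂ × B₂) (A₂ × B₂) ℂ) :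
    bipartiteKronecker M₁ M₂ * bipartiteKronecker N₁ N₂ =
      bipartiteKronecker (M₁ * N₁) (M₂ * N₂) := by
  rw [bipartiteKronecker, bipartiteKronecker, submatrix_mul_equiv, ← mul_kronecker_mul]
  rfl

variable [DecidableEq A₁] [DecidableEq A₂]

lemma IsJam.bipartiteKronecker {J₁ : Matrix (A₁ × B₁) (A₁ × B₁) ℂ}
    {J₂ : Matrix (A₂ × B₂) (A₂ × B₂) ℂ} (hJ₁ : IsJam J₁) (hJ₂ : IsJam J₂) :
    IsJam (bipartiteKronecker J₁ J₂) := by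
  refine ⟨?_, ?_⟩
  · rw [ptA_bipartiteKronecker]
    exact (hJ₁.1.kronecker hJ₂.1).submatrix _
  · rw [trB_bipartiteKronecker, hJ₁.2, hJ₂.2, one_kronecker_one]

variable [DecidableEq B₁] [DecidableEq B₂]

lemma trace_bipartiteKronecker_mul_jordan (K₁ X₁ J₁ : Matrix (A₁ × B₁) (A₁ × B₁) ℂ)
    (K₂ X₂ J₂ : Matrix (A₂ × B₂) (A₂ × B₂) ℂ)
    (h₁ : (X₁ * J₁).trace = 1) (h₂ : (X₂ * J₂).trace = 1) :
    ((bipartiteKronecker K₁ 1 + bipartiteKronecker 1 K₂) *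
        jordan (bipartiteKronecker X₁ X₂) (bipartiteKronecker J₁ J₂)).trace =
      (K₁ * jordan X₁ J₁).trace + (K₂ * jordan X₂ J₂).trace := by
  have h₁' : (J₁ * X₁).trace = 1 := trace_mul_comm J₁ X₁ ▸ h₁
  have h₂' : (J₂ * X₂).trace = 1 := trace_mul_comm J₂ X₂ ▸ h₂
  simp only [jordan, Matrix.mul_smul, trace_smul, Matrix.mul_add, Matrix.add_mul, trace_add,
    bipartiteKronecker_mul_bipartiteKronecker, trace_bipartiteKronecker, Matrix.one_mul, h₁, h₂,
    h₁', h₂']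
  ring

lemma IsCoupling.bipartiteKronecker {ρ₁ : Matrix A₁ A₁ ℂ} {σ₁ : Matrix B₁ B₁ ℂ}
    {ρ₂ : Matrix A₂ A₂ ℂ} {σ₂ : Matrix B₂ B₂ ℂ} {J₁ : Matrix (A₁ × B₁) (A₁ × B₁) ℂ}
    {J₂ : Matrix (A₂ × B₂) (A₂ × B₂) ℂ} (hJ₁ : IsCoupling ρ₁ σ₁ J₁)
    (hJ₂ : IsCoupling ρ₂ σ₂ J₂) :
    IsCoupling (ρ₁ ⊗ₖ ρ₂) (σ₁ ⊗ₖ σ₂) (bipartiteKronecker J₁ J₂) := by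
  refine ⟨hJ₁.1.bipartiteKronecker hJ₂.1, ?_⟩
  rw [kronecker_kronecker_one_eq_bipartiteKronecker, bipartiteKronecker_mul_bipartiteKronecker,
    trA_bipartiteKronecker, hJ₁.2, hJ₂.2]

lemma transportCost_bipartiteKronecker (K₁ : Matrix (A₁ × B₁) (A₁ × B₁) ℂ)
    (K₂ : Matrix (A₂ × B₂) (A₂ × B₂) ℂ) {ρ₁ : Matrix A₁ A₁ ℂ} {σ₁ : Matrix B₁ B₁ ℂ}
    {ρ₂ : Matrix A₂ A₂ ℂ} {σ₂ : Matrix B₂ B₂ ℂ} (hσ₁ : IsState σ₁) (hσ₂ : IsState σ₂)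
    {J₁ : Matrix (A₁ × B₁) (A₁ × B₁) ℂ} {J₂ : Matrix (A₂ × B₂) (A₂ × B₂) ℂ}
    (hJ₁ : IsCoupling ρ₁ σ₁ J₁) (hJ₂ : IsCoupling ρ₂ σ₂ J₂) :
    transportCost (bipartiteKronecker K₁ 1 + bipartiteKronecker 1 K₂) (ρ₁ ⊗ₖ ρ₂)
        (bipartiteKronecker J₁ J₂) =
      transportCost K₁ ρ₁ J₁ + transportCost K₂ ρ₂ J₂ := by
  rw [transportCost, kronecker_kronecker_one_eq_bipartiteKronecker,
    trace_bipartiteKronecker_mul_jordan _ _ _ _ _ _ (hJ₁.trace_mul hσ₁) (hJ₂.trace_mul hσ₂),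
    Complex.add_re]
  rfl

end Product

lemma le_cost_add_cost {A₁ B₁ A₂ B₂ : Type*} [Fintype A₁] [Fintype B₁] [Fintype A₂] [Fintype B₂]
    [DecidableEq A₁] [DecidableEq B₁] [DecidableEq A₂] [DecidableEq B₂]
    (K₁ : Matrix (A₁ × B₁) (A₁ × B₁) ℂ) (K₂ : Matrix (A₂ × B₂) (A₂ × B₂) ℂ)
    {ρ₁ : Matrix A₁ A₁ ℂ} (hρ₁ : IsState ρ₁) {σ₁ : Matrix B₁ B₁ ℂ} (hσ₁ : IsState σ₁)
    {ρ₂ : Matrix A₂ A₂ ℂ} (hρ₂ : IsState ρ₂) {σ₂ : Matrix B₂ B₂ ℂ} (hσ₂ : IsState σ₂) {r : ℝ}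
    (h : ∀ J₁ J₂, IsCoupling ρ₁ σ₁ J₁ → IsCoupling ρ₂ σ₂ J₂ →
      r ≤ transportCost K₁ ρ₁ J₁ + transportCost K₂ ρ₂ J₂) :
    r ≤ cost K₁ ρ₁ σ₁ + cost K₂ ρ₂ σ₂ := by
  rw [← sub_le_iff_le_add']
  refine le_cost hρ₂ hσ₂ K₂ fun J₂ hJ₂ => sub_le_comm.mp ?_
  exact le_cost hρ₁ hσ₁ K₁ fun J₁ hJ₁ => sub_le_iff_le_add.mpr (h J₁ J₂ hJ₁ hJ₂)

theorem stmt13_general {A₁ B₁ A₂ B₂ : Type*} [Fintype A₁] [Fintype B₁] [Fintype A₂] [Fintype B₂]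
    [DecidableEq A₁] [DecidableEq B₁] [DecidableEq A₂] [DecidableEq B₂]
    (K₁ : Matrix (A₁ × B₁) (A₁ × B₁) ℂ)
    (K₂ : Matrix (A₂ × B₂) (A₂ × B₂) ℂ)
    (ρ₁ : Matrix A₁ A₁ ℂ) (hρ₁ : IsState ρ₁) (σ₁ : Matrix B₁ B₁ ℂ) (hσ₁ : IsState σ₁)
    (ρ₂ : Matrix A₂ A₂ ℂ) (hρ₂ : IsState ρ₂) (σ₂ : Matrix B₂ B₂ ℂ) (hσ₂ : IsState σ₂)
    (K₁₂ : Matrix ((A₁ × A₂) × B₁ × B₂) ((A₁ × A₂) × B₁ × B₂) ℂ)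
    (hK₁₂ : K₁₂ = Matrix.of fun p q =>
        K₁ (p.1.1, p.2.1) (q.1.1, q.2.1) *
          (if p.1.2 = q.1.2 ∧ p.2.2 = q.2.2 then 1 else 0) +
        (if p.1.1 = q.1.1 ∧ p.2.1 = q.2.1 then 1 else 0) *
          K₂ (p.1.2, p.2.2) (q.1.2, q.2.2)) :
    cost K₁₂ (ρ₁ ⊗ₖ ρ₂) (σ₁ ⊗ₖ σ₂) ≤ cost K₁ ρ₁ σ₁ + cost K₂ ρ₂ σ₂ := by
  have hK : K₁₂ = bipartiteKronecker K₁ 1 + bipartiteKronecker 1 K₂ := by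
    ext ⟨⟨a₁, a₂⟩, b₁, b₂⟩ ⟨⟨c₁, c₂⟩, d₁, d₂⟩
    simp [hK₁₂, bipartiteKronecker, one_apply, Prod.ext_iff]
  refine le_cost_add_cost K₁ K₂ hρ₁ hσ₁ hρ₂ hσ₂ fun J₁ J₂ hJ₁ hJ₂ => ?_
  rw [← transportCost_bipartiteKronecker K₁ K₂ hσ₁ hσ₂ hJ₁ hJ₂, ← hK]
  exact cost_le_transportCost K₁₂ (hJ₁.bipartiteKronecker hJ₂)

theorem stmt13 {A₁ B₁ A₂ B₂ : Type*} [Fintype A₁] [Fintype B₁] [Fintype A₂] [Fintype B₂]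
    [Nonempty A₁] [Nonempty B₁] [Nonempty A₂] [Nonempty B₂]
    [DecidableEq A₁] [DecidableEq B₁] [DecidableEq A₂] [DecidableEq B₂]
    (K₁ : Matrix (A₁ × B₁) (A₁ × B₁) ℂ) (hK₁ : K₁.IsHermitian)
    (K₂ : Matrix (A₂ × B₂) (A₂ × B₂) ℂ) (hK₂ : K₂.IsHermitian)
    (ρ₁ : Matrix A₁ A₁ ℂ) (hρ₁ : IsState ρ₁) (σ₁ : Matrix B₁ B₁ ℂ) (hσ₁ : IsState σ₁)
    (ρ₂ : Matrix A₂ A₂ ℂ) (hρ₂ : IsState ρ₂) (σ₂ : Matrix B₂ B₂ ℂ) (hσ₂ : IsState σ₂)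
    (K₁₂ : Matrix ((A₁ × A₂) × B₁ × B₂) ((A₁ × A₂) × B₁ × B₂) ℂ)
    (hK₁₂ : K₁₂ = Matrix.of fun p q =>
        K₁ (p.1.1, p.2.1) (q.1.1, q.2.1) *
          (if p.1.2 = q.1.2 ∧ p.2.2 = q.2.2 then 1 else 0) +
        (if p.1.1 = q.1.1 ∧ p.2.1 = q.2.1 then 1 else 0) *
          K₂ (p.1.2, p.2.2) (q.1.2, q.2.2)) :
    cost K₁₂ (ρ₁ ⊗ₖ ρ₂) (σ₁ ⊗ₖ σ₂) ≤ cost K₁ ρ₁ σ₁ + cost K₂ ρ₂ σ₂ :=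
  stmt13_general K₁ K₂ ρ₁ hρ₁ σ₁ hσ₁ ρ₂ hρ₂ σ₂ hσ₂ K₁₂ hK₁₂
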